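/- In λ⟨catch⟩, for every type σ, if r ∈ SN and u₁,…,uₙ is a finite sequence of strongly normalizing terms, then the applied term (throw α r) u₁ ⋯ uₙ is in ⟦σ⟧ (in particular it is strongly normalizing). -/

import Mathlib

/-! Formalization of the λ⟨catch⟩ calculus (de Bruijn indices for both term
variables and continuation variables). -/

/-- Types: unit, lists, arrows. -/
inductive Ty : Type
  | unit : Ty
  | list : Ty → Ty
  | arrow : Ty → Ty → Ty
  deriving DecidableEq

/-- A type is arrow-free if the arrow constructor does not occur in it. -/
def Ty.ArrowFree : Ty → Prop
  | .unit => True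
  | .list σ => σ.ArrowFree
  | .arrow _ _ => False

/-- Terms of λ⟨catch⟩. Term variables and continuation variables are both
de Bruijn indices (`lam` binds a term variable, `catch` binds a continuation
variable). -/
inductive Tm : Type
  | var : ℕ → Tm
  | unit : Tm
  | nil : Tm
  | cons : Tm
  | lrec : Tm
  | lam : Tm → Tm
  | app : Tm → Tm → Tm
  | catch : Tm → Tm
  | throw : ℕ → Tm → Tm
  deriving DecidableEq

/-- Values of λ⟨catch⟩. -/
inductive IsValue : Tm → Prop
  | var (x) : IsValue (.var x)
  | unit : IsValue .unit
  | nil : IsValue .nil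
  | cons : IsValue .cons
  | cons1 {v} : IsValue v → IsValue (.app .cons v)
  | cons2 {v w} : IsValue v → IsValue w → IsValue (.app (.app .cons v) w)
  | lrec : IsValue .lrec
  | lrec1 {v} : IsValue v → IsValue (.app .lrec v)
  | lrec2 {v w} : IsValue v → IsValue w → IsValue (.app (.app .lrec v) w)
  | lam (t) : IsValue (.lam t)

/-- Boolean version of `IsValue`. -/
def isVal : Tm → Bool
  | .var _ => true
  | .unit => true
  | .nil => true
  | .cons => true
  | .lrec => true
  | .lam _ => true
  | .app .cons v => isVal v
  | .app .lrec v => isVal v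
  | .app (.app .cons v) w => isVal v && isVal w
  | .app (.app .lrec v) w => isVal v && isVal w
  | _ => false

/-- The set of free continuation variables of a term. -/
def FCV : Tm → Set ℕ
  | .var _ => ∅
  | .unit => ∅
  | .nil => ∅
  | .cons => ∅
  | .lrec => ∅
  | .lam t => FCV t
  | .app t s => FCV t ∪ FCV s
  | .catch t => {k | k + 1 ∈ FCV t}
  | .throw a t => insert a (FCV t)

/-- Boolean test whether continuation variable `k` occurs free. -/
def kfree (k : ℕ) : Tm → Bool
  | .var _ => false
  | .unit => false
  | .nil => false
  | .cons => false
  | .lrec => false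
  | .lam t => kfree k t
  | .app t s => kfree k t || kfree k s
  | .catch t => kfree (k + 1) t
  | .throw a t => a == k || kfree k t

/-- Lift a renaming under a binder. -/
def liftF (f : ℕ → ℕ) : ℕ → ℕ
  | 0 => 0
  | n + 1 => f n + 1

/-- Renaming of term variables. -/
def renameTm (f : ℕ → ℕ) : Tm → Tm
  | .var x => .var (f x)
  | .unit => .unit
  | .nil => .nil
  | .cons => .cons
  | .lrec => .lrec
  | .lam t => .lam (renameTm (liftF f) t)
  | .app t s => .app (renameTm f t) (renameTm f s)
  | .catch t => .catch (renameTm f t)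
  | .throw a t => .throw a (renameTm f t)

/-- Renaming of continuation variables. -/
def renameK (f : ℕ → ℕ) : Tm → Tm
  | .var x => .var x
  | .unit => .unit
  | .nil => .nil
  | .cons => .cons
  | .lrec => .lrec
  | .lam t => .lam (renameK f t)
  | .app t s => .app (renameK f t) (renameK f s)
  | .catch t => .catch (renameK (liftF f) t)
  | .throw a t => .throw (f a) (renameK f t)

/-- Lift a parallel term substitution under a `lam` binder. -/
def liftS (σ : ℕ → Tm) : ℕ → Tm
  | 0 => .var 0
  | n + 1 => renameTm Nat.succ (σ n)

/-- Capture-avoiding parallel substitution of term variables. -/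
def subst (σ : ℕ → Tm) : Tm → Tm
  | .var x => σ x
  | .unit => .unit
  | .nil => .nil
  | .cons => .cons
  | .lrec => .lrec
  | .lam t => .lam (subst (liftS σ) t)
  | .app t s => .app (subst σ t) (subst σ s)
  | .catch t => .catch (subst (fun n => renameK Nat.succ (σ n)) t)
  | .throw a t => .throw a (subst σ t)

/-- Capture-avoiding substitution `t[x := r]` of `r` for the term variable
bound at index 0. -/
def subst0 (t r : Tm) : Tm :=
  subst (fun n => match n with | 0 => r | n + 1 => .var n) t

/-- The typing judgment `Γ; Δ ⊢ t : ρ`.  `Γ` assigns types to term variables,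
`Δ` assigns (arrow-free) types to continuation variables. -/
inductive HasTy : List Ty → List Ty → Tm → Ty → Prop
  | var {Γ Δ x ρ} : Γ[x]? = some ρ → HasTy Γ Δ (.var x) ρ
  | unit {Γ Δ} : HasTy Γ Δ .unit .unit
  | nil {Γ Δ σ} : HasTy Γ Δ .nil (.list σ)
  | cons {Γ Δ σ} : HasTy Γ Δ .cons (.arrow σ (.arrow (.list σ) (.list σ)))
  | lrec {Γ Δ ρ σ} :
      HasTy Γ Δ .lrec
        (.arrow ρ (.arrow (.arrow σ (.arrow (.list σ) (.arrow ρ ρ))) (.arrow (.list σ) ρ)))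
  | lam {Γ Δ σ τ t} : HasTy (σ :: Γ) Δ t τ → HasTy Γ Δ (.lam t) (.arrow σ τ)
  | app {Γ Δ σ τ t s} : HasTy Γ Δ t (.arrow σ τ) → HasTy Γ Δ s σ → HasTy Γ Δ (.app t s) τ
  | catch {Γ Δ ψ t} : ψ.ArrowFree → HasTy Γ (ψ :: Δ) t ψ → HasTy Γ Δ (.catch t) ψ
  | throw {Γ Δ a ψ τ t} : Δ[a]? = some ψ → ψ.ArrowFree → HasTy Γ Δ t ψ →
      HasTy Γ Δ (.throw a t) τ

/-- One-step reduction of λ⟨catch⟩: the compatible closure of the basic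
reduction rules. -/
inductive Red : Tm → Tm → Prop
  | beta {t v} : IsValue v → Red (.app (.lam t) v) (subst0 t v)
  | throwAppL {a t s} : Red (.app (.throw a t) s) (.throw a t)
  | throwAppR {v a t} : IsValue v → Red (.app v (.throw a t)) (.throw a t)
  | throwThrow {b a t} : Red (.throw b (.throw a t)) (.throw a t)
  | catch1 {t} : Red (.catch (.throw 0 t)) (.catch t)
  | catch2 {b v} : IsValue v →
      Red (.catch (.throw (b + 1) (renameK Nat.succ v))) (.throw b v)
  | catch3 {v} : IsValue v → Red (.catch (renameK Nat.succ v)) v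
  | lrecNil {vr vs} : IsValue vr → IsValue vs →
      Red (.app (.app (.app .lrec vr) vs) .nil) vr
  | lrecCons {vr vs vh vt} : IsValue vr → IsValue vs → IsValue vh → IsValue vt →
      Red (.app (.app (.app .lrec vr) vs) (.app (.app .cons vh) vt))
          (.app (.app (.app vs vh) vt) (.app (.app (.app .lrec vr) vs) vt))
  | appL {t t' s} : Red t t' → Red (.app t s) (.app t' s)
  | appR {t s s'} : Red s s' → Red (.app t s) (.app t s')
  | lamC {t t'} : Red t t' → Red (.lam t) (.lam t')
  | catchC {t t'} : Red t t' → Red (.catch t) (.catch t')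
  | throwC {a t t'} : Red t t' → Red (.throw a t) (.throw a t')

/-- Compound contexts Ē ::= □ | Ē t | v Ē | throw α Ē. -/
inductive Ctx : Type
  | hole : Ctx
  | appL : Ctx → Tm → Ctx
  | appR : Tm → Ctx → Ctx
  | throw : ℕ → Ctx → Ctx

/-- Filling the hole of a compound context. -/
def Ctx.fill : Ctx → Tm → Tm
  | .hole, s => s
  | .appL E t, s => .app (E.fill s) t
  | .appR v E, s => .app v (E.fill s)
  | .throw a E, s => .throw a (E.fill s)

/-- Well-formedness of a compound context: the terms in `v Ē` positions must
be values. -/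
inductive Ctx.Ok : Ctx → Prop
  | hole : Ctx.Ok .hole
  | appL {E t} : Ctx.Ok E → Ctx.Ok (.appL E t)
  | appR {v E} : IsValue v → Ctx.Ok E → Ctx.Ok (.appR v E)
  | throw {a E} : Ctx.Ok E → Ctx.Ok (.throw a E)

/-- Parallel reduction `t ⇒ t'`. -/
inductive PRed : Tm → Tm → Prop
  | var (x) : PRed (.var x) (.var x)
  | unit : PRed .unit .unit
  | nil : PRed .nil .nil
  | cons : PRed .cons .cons
  | lrec : PRed .lrec .lrec
  | app {t t' r r'} : PRed t t' → PRed r r' → PRed (.app t r) (.app t' r')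
  | lam {t t'} : PRed t t' → PRed (.lam t) (.lam t')
  | catch {t t'} : PRed t t' → PRed (.catch t) (.catch t')
  | beta {t t' v r} : IsValue v → PRed t t' → PRed v r →
      PRed (.app (.lam t) v) (subst0 t' r)
  | throw {E a t t'} : Ctx.Ok E → PRed t t' →
      PRed (E.fill (.throw a t)) (.throw a t')
  | catch1 {t t'} : PRed t t' → PRed (.catch (.throw 0 t)) (.catch t')
  | catch2 {b v t} : IsValue v → PRed v t →
      PRed (.catch (.throw (b + 1) (renameK Nat.succ v))) (.throw b t)
  | catch3 {v t} : IsValue v → PRed v t → PRed (.catch (renameK Nat.succ v)) t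
  | lrecNil {vr vs r} : IsValue vr → IsValue vs → PRed vr r →
      PRed (.app (.app (.app .lrec vr) vs) .nil) r
  | lrecCons {vr vs vh vt r s h t} : IsValue vr → IsValue vs → IsValue vh → IsValue vt →
      PRed vr r → PRed vs s → PRed vh h → PRed vt t →
      PRed (.app (.app (.app .lrec vr) vs) (.app (.app .cons vh) vt))
           (.app (.app (.app s h) t) (.app (.app (.app .lrec r) s) t))

/-- Parallel reduction on compound contexts. -/
inductive CPred : Ctx → Ctx → Prop
  | hole : CPred .hole .hole
  | throwHole (a) : CPred (.throw a .hole) .hole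
  | appL {E F t t'} : CPred E F → PRed t t' → CPred (.appL E t) (.appL F t')
  | appR {v t E F} : IsValue v → CPred E F → PRed v t → CPred (.appR v E) (.appR t F)
  | throw {a E F} : CPred E F → CPred (.throw a E) (.throw a F)
  | throwThrow {b a E F} : CPred E F → CPred (.throw b (.throw a E)) (.throw a F)

/-- Size of a term. -/
def Tm.size : Tm → ℕ
  | .var _ => 1
  | .unit => 1
  | .nil => 1
  | .cons => 1
  | .lrec => 1
  | .lam t => t.size + 1
  | .app t s => t.size + s.size + 1
  | .catch t => t.size + 1
  | .throw _ t => t.size + 1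

theorem size_renameK (f : ℕ → ℕ) (t : Tm) : (renameK f t).size = t.size := by
  induction t generalizing f <;> simp [renameK, Tm.size, *]

/-- Does the term have the shape `throw a t`? -/
def isThrow : Tm → Bool
  | .throw _ _ => true
  | _ => false

/-- Does the term have the shape `Ē[throw a q]` for some compound context `Ē`? -/
def hasThrow : Tm → Bool
  | .throw _ _ => true
  | .app t s => hasThrow t || (isVal t && hasThrow s)
  | _ => false

/-- The complete development `t*` of a term `t`: all redexes of `t` are
contracted simultaneously. -/
def cd : Tm → Tm
  | .var x => .var x
  | .unit => .unit
  | .nil => .nil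
  | .cons => .cons
  | .lrec => .lrec
  | .lam t => .lam (cd t)
  | .throw a t => if isThrow t then cd t else .throw a (cd t)
  | .catch t =>
    match t with
    | .throw 0 q => .catch (cd q)
    | .throw (b + 1) u =>
        if isVal u && !kfree 0 u then .throw b (cd (renameK Nat.pred u))
        else .catch (cd (.throw (b + 1) u))
    | u =>
        if isVal u && !kfree 0 u then cd (renameK Nat.pred u)
        else .catch (cd u)
  | .app t s =>
    if hasThrow t then cd t
    else if isVal t && hasThrow s then cd s
    else match t, s with
      | .lam t', v => if isVal v then subst0 (cd t') (cd v) else .app (cd (.lam t')) (cd v)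
      | .app (.app .lrec vr) vs, .nil =>
          if isVal vr && isVal vs then cd vr
          else .app (cd (.app (.app .lrec vr) vs)) (cd .nil)
      | .app (.app .lrec vr) vs, .app (.app .cons vh) vt =>
          if isVal vr && isVal vs && isVal vh && isVal vt then
            .app (.app (.app (cd vs) (cd vh)) (cd vt))
                 (.app (.app (.app .lrec (cd vr)) (cd vs)) (cd vt))
          else .app (cd (.app (.app .lrec vr) vs)) (cd (.app (.app .cons vh) vt))
      | t, s => .app (cd t) (cd s)
  termination_by t => t.size
  decreasing_by all_goals (simp_all [Tm.size, size_renameK] <;> omega)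

/-- Strong normalization: every reduction sequence from `t` is finite. -/
def SN (t : Tm) : Prop := Acc (fun a b => Red b a) t

/-- The list interpretation `[S]` of a set of terms `S`. -/
inductive ListInt (S : Set Tm) : Tm → Prop
  | mk {t} :
      (∀ v w, IsValue v → IsValue w →
        Relation.ReflTransGen Red t (.app (.app .cons v) w) → v ∈ S) →
      (∀ v w, IsValue v → IsValue w →
        Relation.ReflTransGen Red t (.app (.app .cons v) w) → ListInt S w) →
      ListInt S t

/-- The reducibility interpretation `⟦σ⟧` of a type. -/
def interp : Ty → Set Tm
  | .unit => {t | SN t}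
  | .list σ => {t | SN t ∧ ListInt (interp σ) t}
  | .arrow σ τ => {t | ∀ s ∈ interp σ, Tm.app t s ∈ interp τ}

/-- A term is neutral if it is not of the shape `λx.r`, `lrec v_r v_s`, or
`cons v w`. -/
def Neutral (t : Tm) : Prop :=
  (∀ r, t ≠ .lam r) ∧
  (∀ vr vs, IsValue vr → IsValue vs → t ≠ .app (.app .lrec vr) vs) ∧
  (∀ v w, IsValue v → IsValue w → t ≠ .app (.app .cons v) w)

/-- Iterated application `t u₁ ⋯ uₙ`. -/
def appList (t : Tm) (us : List Tm) : Tm := us.foldl .app t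

/-- The term `cons w₁ (cons … (cons wₙ nil))`. -/
def listEnc : List Tm → Tm
  | [] => .nil
  | w :: ws => .app (.app .cons w) (listEnc ws)

/-! A term `throw α r u₁ ⋯ uₙ` can only reduce inside `r`, inside some `uᵢ`, or by discarding
`u₁`, so all its reducts again have a `throw` at the head of their application spine. Such a
term is never a value, hence never reduces to a cons-cell and lies in every `[S]`; and it is
strongly normalizing as soon as `r` and the `uᵢ` are. Since throw-headed spines are closed under
application, they lie in every `⟦σ⟧`, by induction on `σ` together with `⟦σ⟧ ⊆ SN`. -/

inductive ThrowSpine : Tm → Prop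
  | throw (a : ℕ) (r : Tm) : ThrowSpine (.throw a r)
  | app {p : Tm} (u : Tm) : ThrowSpine p → ThrowSpine (.app p u)

namespace ThrowSpine

theorem appList {p : Tm} (hp : ThrowSpine p) (us : List Tm) :
    ThrowSpine (_root_.appList p us) := by
  induction us generalizing p with
  | nil => exact hp
  | cons u us ih => exact ih (hp.app u)

theorem not_isValue {p : Tm} (hp : ThrowSpine p) : ¬ IsValue p := by
  intro hv
  induction hp with
  | throw => cases hv
  | app _ hp ih =>
    cases hv with
    | cons1 | lrec1 => cases hp
    | cons2 hv => exact ih (.cons1 hv)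
    | lrec2 hv => exact ih (.lrec1 hv)

theorem red {p p' : Tm} (hp : ThrowSpine p) (h : Red p p') : ThrowSpine p' := by
  induction h with
  | throwAppL | throwThrow | throwC => exact .throw _ _
  | throwAppR hv =>
    cases hp with
    | app _ hp => exact absurd hv hp.not_isValue
  | lrecNil hvr hvs | lrecCons hvr hvs =>
    cases hp with
    | app _ hp => exact absurd (.lrec2 hvr hvs) hp.not_isValue
  | appL _ ih =>
    cases hp with
    | app _ hp => exact (ih hp).app _
  | appR =>
    cases hp with
    | app _ hp => exact hp.app _
  | beta =>
    cases hp with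
    | app _ hp => cases hp
  | catch1 | catch2 | catch3 | lamC | catchC => cases hp

theorem reflTransGen {p p' : Tm} (hp : ThrowSpine p) (h : Relation.ReflTransGen Red p p') :
    ThrowSpine p' := by
  induction h with
  | refl => exact hp
  | tail _ h ih => exact ih.red h

theorem listInt (S : Set Tm) {p : Tm} (hp : ThrowSpine p) : ListInt S p :=
  have not_cons : ∀ v w, IsValue v → IsValue w →
      ¬ Relation.ReflTransGen Red p (.app (.app .cons v) w) :=
    fun _ _ hv hw h => (hp.reflTransGen h).not_isValue (.cons2 hv hw)
  ⟨fun v w hv hw h => absurd h (not_cons v w hv hw),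
    fun v w hv hw h => absurd h (not_cons v w hv hw)⟩

end ThrowSpine

theorem sn_unit : SN .unit :=
  ⟨_, fun _ h => by cases h⟩

theorem SN.of_app_left {t s : Tm} (h : SN (.app t s)) : SN t := by
  generalize hp : Tm.app t s = p at h
  induction h generalizing t with
  | intro _ _ ih =>
    subst hp
    exact ⟨_, fun _ ht => ih _ (.appL ht) rfl⟩

theorem SN.throw {r : Tm} (hr : SN r) (a : ℕ) : SN (.throw a r) := by
  induction hr with
  | intro r hr ih =>
    refine ⟨_, fun t h => ?_⟩
    cases h with
    | throwThrow => exact ⟨_, hr⟩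
    | throwC h => exact ih _ h

-- The only step that does not come from a step of `p` or `u` is `throw α t u → throw α t`.
theorem ThrowSpine.sn_app {p u : Tm} (hp : ThrowSpine p) (hpsn : SN p) (husn : SN u) :
    SN (.app p u) := by
  induction hpsn generalizing u with
  | intro p hpacc ihp =>
    induction husn with
    | intro u huacc ihu =>
      refine ⟨_, fun t h => ?_⟩
      cases h with
      | throwAppL => exact ⟨_, hpacc⟩
      | appL h => exact ihp _ h (hp.red h) ⟨_, huacc⟩
      | appR h => exact ihu _ h
      | beta => cases hp
      | throwAppR hv => exact absurd hv hp.not_isValue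
      | lrecNil hvr hvs | lrecCons hvr hvs => exact absurd (.lrec2 hvr hvs) hp.not_isValue

theorem ThrowSpine.sn_appList {p : Tm} (hp : ThrowSpine p) (hpsn : SN p) {us : List Tm}
    (hus : ∀ u ∈ us, SN u) : SN (_root_.appList p us) := by
  induction us generalizing p with
  | nil => exact hpsn
  | cons u us ih =>
    exact ih (hp.app u) (hp.sn_app hpsn (hus u (.head us)))
      fun v hv => hus v (.tail u hv)

theorem sn_of_mem_interp_and_throwSpine_mem_interp (σ : Ty) :
    (∀ t ∈ interp σ, SN t) ∧ ∀ p, ThrowSpine p → SN p → p ∈ interp σ := by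
  induction σ with
  | unit => exact ⟨fun _ ht => ht, fun _ _ hpsn => hpsn⟩
  | list σ _ => exact ⟨fun _ ht => ht.1, fun _ hp hpsn => ⟨hpsn, hp.listInt _⟩⟩
  | arrow σ τ ihσ ihτ =>
    refine ⟨fun t ht => ?_, fun p hp hpsn s hs => ?_⟩
    · have hthrow : Tm.throw 0 .unit ∈ interp σ := ihσ.2 _ (.throw 0 .unit) (sn_unit.throw 0)
      exact (ihτ.1 _ (ht _ hthrow)).of_app_left
    · exact ihτ.2 _ (hp.app s) (hp.sn_app hpsn (ihσ.1 s hs))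

/-- A throw of a strongly normalizing term, applied to a sequence of strongly
normalizing terms, is reducible at every type. -/
theorem throw_app_interp (σ : Ty) {a : ℕ} {r : Tm} (hr : SN r)
    (us : List Tm) (hus : ∀ u ∈ us, SN u) :
    appList (Tm.throw a r) us ∈ interp σ :=
  have hspine := ThrowSpine.throw a r
  (sn_of_mem_interp_and_throwSpine_mem_interp σ).2 _ (hspine.appList us)
    (hspine.sn_appList (hr.throw a) hus)
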